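/- Let R = (rᵢⱼ) be a real 3×3 matrix with RᵀR = I and det R = 1, suppose r₃₃ ≠ −1, let c₃ ∈ ℝ, and set c := (r₃₁c₃/(r₃₃+1), r₃₂c₃/(r₃₃+1), c₃) ∈ ℝ³. Then the fundamental matrix F := −[c]×·Rᵀ equals (c₃/(r₃₃+1)) · [r₁₂−r₂₁, r₁₁+r₂₂, r₃₂; −r₁₁−r₂₂, r₁₂−r₂₁, −r₃₁; −r₂₃, r₁₃, 0]. In particular, the top-left 2×2 block F₂ₓ₂ of F is a scalar multiple of a 2×2 rotation matrix, so F₂ₓ₂ᵀF₂ₓ₂ is a scalar multiple of the 2×2 identity. -/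
import Mathlib


open Matrix

/-- The skew-symmetric cross-product matrix [t]× for t ∈ ℝ³. -/
def crossMat (t : Fin 3 → ℝ) : Matrix (Fin 3) (Fin 3) ℝ :=
  !![0, -t 2, t 1; t 2, 0, -t 0; -t 1, t 0, 0]

/-- for R ∈ SO(3) with r₃₃ ≠ −1 and camera center
c = (r₃₁c₃/(r₃₃+1), r₃₂c₃/(r₃₃+1), c₃), the fundamental matrix F = −[c]×Rᵀ equals
(c₃/(r₃₃+1))·[r₁₂−r₂₁, r₁₁+r₂₂, r₃₂; −r₁₁−r₂₂, r₁₂−r₂₁, −r₃₁; −r₂₃, r₁₃, 0];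
in particular F₂ₓ₂ᵀF₂ₓ₂ is a scalar multiple of the identity. -/
theorem fundamental_matrix_formula_plus (R : Matrix (Fin 3) (Fin 3) ℝ)
    (hR : Rᵀ * R = 1) (hdet : R.det = 1) (h33 : R 2 2 ≠ -1) (c₃ : ℝ) :
    let c : Fin 3 → ℝ :=
      ![R 2 0 * c₃ / (R 2 2 + 1), R 2 1 * c₃ / (R 2 2 + 1), c₃]
    let F : Matrix (Fin 3) (Fin 3) ℝ := -(crossMat c) * Rᵀ
    F = (c₃ / (R 2 2 + 1)) •
        !![R 0 1 - R 1 0,    R 0 0 + R 1 1, R 2 1;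
           -(R 0 0) - R 1 1, R 0 1 - R 1 0, -(R 2 0);
           -(R 1 2),         R 0 2,         0] ∧
      ∃ s : ℝ, (!![F 0 0, F 0 1; F 1 0, F 1 1])ᵀ * !![F 0 0, F 0 1; F 1 0, F 1 1] =
        s • (1 : Matrix (Fin 2) (Fin 2) ℝ) := by
  intro c F
  have hd : R 2 2 + 1 ≠ 0 := fun h => h33 (by linarith)
  have hadj : Rᵀ = R.adjugate := by
    calc Rᵀ = Rᵀ * (R * R.adjugate) := by
            rw [Matrix.mul_adjugate, hdet, one_smul, mul_one]
      _ = (Rᵀ * R) * R.adjugate := by rw [mul_assoc]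
      _ = R.adjugate := by rw [hR, one_mul]
  have e : ∀ i j, R j i = R.adjugate i j := fun i j => by
    rw [← hadj]; rfl
  have e01 : R 1 0 = -(R 0 1 * R 2 2) + R 0 2 * R 2 1 := by
    have := e 0 1; rwa [Matrix.adjugate_fin_three] at this
  have e00 : R 0 0 = R 1 1 * R 2 2 - R 1 2 * R 2 1 := by
    have := e 0 0; rwa [Matrix.adjugate_fin_three] at this
  have e11 : R 1 1 = R 0 0 * R 2 2 - R 0 2 * R 2 0 := by
    have := e 1 1; rwa [Matrix.adjugate_fin_three] at this
  have e10 : R 0 1 = -(R 1 0 * R 2 2) + R 1 2 * R 2 0 := by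
    have := e 1 0; rwa [Matrix.adjugate_fin_three] at this
  have e21 : R 1 2 = -(R 0 0 * R 2 1) + R 0 1 * R 2 0 := by
    have := e 2 1; rwa [Matrix.adjugate_fin_three] at this
  have e20 : R 0 2 = R 1 0 * R 2 1 - R 1 1 * R 2 0 := by
    have := e 2 0; rwa [Matrix.adjugate_fin_three] at this
  have key : ∀ i j : Fin 3, F i j = ((c₃ / (R 2 2 + 1)) •
        !![R 0 1 - R 1 0,    R 0 0 + R 1 1, R 2 1;
           -(R 0 0) - R 1 1, R 0 1 - R 1 0, -(R 2 0);
           -(R 1 2),         R 0 2,         0]) i j := by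
    have tac : ∀ i j : Fin 3, True := fun _ _ => trivial
    intro i j
    show (-(crossMat c) * Rᵀ) i j = _
    have : ∀ (i j : Fin 3), True := fun _ _ => trivial
    fin_cases i <;> fin_cases j
    case _ => simp [crossMat, c, Matrix.mul_apply, Fin.sum_univ_three];
              field_simp; linear_combination c₃ * e01
    case _ => simp [crossMat, c, Matrix.mul_apply, Fin.sum_univ_three];
              field_simp; linear_combination (-c₃) * e00
    case _ => simp [crossMat, c, Matrix.mul_apply, Fin.sum_univ_three];
              field_simp; ring
    case _ => simp [crossMat, c, Matrix.mul_apply, Fin.sum_univ_three];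
              field_simp; linear_combination c₃ * e11
    case _ => simp [crossMat, c, Matrix.mul_apply, Fin.sum_univ_three];
              field_simp; linear_combination (-c₃) * e10
    case _ => simp [crossMat, c, Matrix.mul_apply, Fin.sum_univ_three];
              field_simp; ring
    case _ => simp [crossMat, c, Matrix.mul_apply, Fin.sum_univ_three];
              field_simp; linear_combination c₃ * e21
    case _ => simp [crossMat, c, Matrix.mul_apply, Fin.sum_univ_three];
              field_simp; linear_combination (-c₃) * e20
    case _ => simp [crossMat, c, Matrix.mul_apply, Fin.sum_univ_three];
              field_simp; ring
  have hF : F = (c₃ / (R 2 2 + 1)) •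
        !![R 0 1 - R 1 0,    R 0 0 + R 1 1, R 2 1;
           -(R 0 0) - R 1 1, R 0 1 - R 1 0, -(R 2 0);
           -(R 1 2),         R 0 2,         0] := by
    ext i j; exact key i j
  refine ⟨hF, (c₃ / (R 2 2 + 1))^2 * ((R 0 1 - R 1 0)^2 + (R 0 0 + R 1 1)^2), ?_⟩
  have h00 : F 0 0 = (c₃ / (R 2 2 + 1)) * (R 0 1 - R 1 0) := by rw [hF]; simp
  have h01 : F 0 1 = (c₃ / (R 2 2 + 1)) * (R 0 0 + R 1 1) := by rw [hF]; simp
  have h10 : F 1 0 = (c₃ / (R 2 2 + 1)) * (-(R 0 0) - R 1 1) := by rw [hF]; simp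
  have h11 : F 1 1 = (c₃ / (R 2 2 + 1)) * (R 0 1 - R 1 0) := by rw [hF]; simp
  rw [h00, h01, h10, h11]
  ext i j
  fin_cases i <;> fin_cases j <;>
    simp [Matrix.mul_apply, Fin.sum_univ_two, Matrix.one_apply, Matrix.vecHead,
      Matrix.vecTail] <;> ring
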